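/- Let U = {(x,y,p,q) ∈ ℝ⁴ : q > 0}. Then the smooth function F : U → ℝ defined by F(x,y,p,q) = q^{3/2} satisfies both the Wuenschmann condition A = F_y + D(K) − (2/3) F_q K ≡ 0 and the Cartan condition G = D(D(F_{qq})) − D(F_{qp}) + F_{qy} ≡ 0 on U, where D = ∂_x + p ∂_y + q ∂_p + F ∂_q and K = (1/6) D(F_q) − (1/9) F_q² − (1/2) F_p. -/

import Mathlib

noncomputable section

/-- Points of the second jet space: coordinates `(x, y, p, q)`. -/
abbrev V4 : Type := ℝ × ℝ × ℝ × ℝ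

/-- Directional (partial) derivative of `f` at `m` in the constant direction `v`. -/
def pd (v : V4) (f : V4 → ℝ) (m : V4) : ℝ := fderiv ℝ f m v

def ex : V4 := (1, 0, 0, 0)
def ey : V4 := (0, 1, 0, 0)
def ep : V4 := (0, 0, 1, 0)
def eq' : V4 := (0, 0, 0, 1)

/-- The total derivative operator `(Dh)(m) = h_x + p h_y + q h_p + F h_q`. -/
def Dtot (F : V4 → ℝ) (h : V4 → ℝ) (m : V4) : ℝ :=
  pd ex h m + m.2.2.1 * pd ey h m + m.2.2.2 * pd ep h m + F m * pd eq' h m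

/-- `K = (1/6) D(F_q) − (1/9) F_q² − (1/2) F_p`. -/
def Kf (F : V4 → ℝ) (m : V4) : ℝ :=
  (1/6) * Dtot F (pd eq' F) m - (1/9) * (pd eq' F m)^2 - (1/2) * pd ep F m

/-- The Wuenschmann expression `A = F_y + D(K) − (2/3) F_q K`. -/
def Wu (F : V4 → ℝ) (m : V4) : ℝ :=
  pd ey F m + Dtot F (Kf F) m - (2/3) * pd eq' F m * Kf F m

/-- The Cartan expression `G = D(D(F_{qq})) − D(F_{qp}) + F_{qy}`. -/
def CartanG (F : V4 → ℝ) (m : V4) : ℝ :=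
  Dtot F (Dtot F (pd eq' (pd eq' F))) m - Dtot F (pd ep (pd eq' F)) m +
    pd ey (pd eq' F) m

/-!
On `U = {q > 0}` every function occurring in `A` and `G` depends on `q` alone, and on such
functions `∂_x`, `∂_y`, `∂_p` vanish while `D` acts as `F ∂_q`. For `F = f(q)` the two conditions
therefore become ODE expressions in `f`:
`A = f² f''' / 6 - f f' f'' / 6 + 2 f'³ / 27` and `G = f f' f''' + f² f''''`.
For `f = q^r` these equal `r (2r - 3)(r - 3) q^(3r-3) / 27` and
`r (r - 1)(r - 2)(2r - 3) q^(3r-4)`, and both vanish at `r = 3/2`.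
-/

open Filter

def FactorsThroughQ (h : V4 → ℝ) (g : ℝ → ℝ) : Prop :=
  ∀ m : V4, 0 < m.2.2.2 → h m = g m.2.2.2

namespace FactorsThroughQ

variable {F h : V4 → ℝ} {f f₁ f₂ f₃ f₄ g g' : ℝ → ℝ}

theorem pd (hh : FactorsThroughQ h g) (hg : ∀ t, 0 < t → HasDerivAt g (g' t) t) (v : V4) :
    FactorsThroughQ (pd v h) fun t => g' t * v.2.2.2 := by
  intro m hm
  have hU : {m : V4 | 0 < m.2.2.2} ∈ nhds m :=
    (isOpen_lt continuous_const (by fun_prop : Continuous fun m : V4 => m.2.2.2)).mem_nhds hm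
  have hloc : h =ᶠ[nhds m] fun m => g m.2.2.2 := eventually_of_mem hU hh
  have hq : HasFDerivAt (fun m : V4 => m.2.2.2) _ m :=
    (ContinuousLinearMap.snd ℝ ℝ ℝ ∘L ContinuousLinearMap.snd ℝ ℝ (ℝ × ℝ) ∘L
      ContinuousLinearMap.snd ℝ ℝ (ℝ × ℝ × ℝ)).hasFDerivAt
  have hderiv : HasFDerivAt (fun m : V4 => g m.2.2.2) _ m := (hg _ hm).comp_hasFDerivAt m hq
  rw [_root_.pd, hloc.fderiv_eq, hderiv.fderiv]
  simp [mul_comm]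

theorem pd_eq' (hh : FactorsThroughQ h g) (hg : ∀ t, 0 < t → HasDerivAt g (g' t) t) :
    FactorsThroughQ (_root_.pd eq' h) g' := by
  intro m hm
  rw [hh.pd hg eq' m hm]
  simp [eq']

theorem pd_of_q_eq_zero (hh : FactorsThroughQ h g) (hg : ∀ t, 0 < t → HasDerivAt g (g' t) t)
    {v : V4} (hv : v.2.2.2 = 0) : FactorsThroughQ (_root_.pd v h) fun _ => 0 := by
  intro m hm
  rw [hh.pd hg v m hm]
  simp [hv]

theorem dtot (hF : FactorsThroughQ F f) (hh : FactorsThroughQ h g)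
    (hg : ∀ t, 0 < t → HasDerivAt g (g' t) t) :
    FactorsThroughQ (Dtot F h) fun t => f t * g' t := by
  intro m hm
  rw [Dtot, hh.pd hg ex m hm, hh.pd hg ey m hm, hh.pd hg ep m hm, hh.pd hg eq' m hm, hF m hm]
  simp [ex, ey, ep, eq']

theorem kf (hF : FactorsThroughQ F f) (hf : ∀ t, 0 < t → HasDerivAt f (f₁ t) t)
    (hf₁ : ∀ t, 0 < t → HasDerivAt f₁ (f₂ t) t) :
    FactorsThroughQ (Kf F) fun t => 1 / 6 * (f t * f₂ t) - 1 / 9 * f₁ t ^ 2 := by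
  intro m hm
  have hFq := hF.pd_eq' hf
  rw [Kf, hF.dtot hFq hf₁ m hm, hFq m hm, hF.pd_of_q_eq_zero hf (v := ep) rfl m hm]
  ring

theorem wu (hF : FactorsThroughQ F f) (hf : ∀ t, 0 < t → HasDerivAt f (f₁ t) t)
    (hf₁ : ∀ t, 0 < t → HasDerivAt f₁ (f₂ t) t) (hf₂ : ∀ t, 0 < t → HasDerivAt f₂ (f₃ t) t) :
    FactorsThroughQ (Wu F) fun t =>
      f t ^ 2 * f₃ t / 6 - f t * f₁ t * f₂ t / 6 + 2 * f₁ t ^ 3 / 27 := by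
  have hK := hF.kf hf hf₁
  have hk : ∀ t, 0 < t → HasDerivAt (fun t => 1 / 6 * (f t * f₂ t) - 1 / 9 * f₁ t ^ 2)
      (1 / 6 * (f₁ t * f₂ t + f t * f₃ t) - 1 / 9 * (2 * f₁ t * f₂ t)) t := fun t ht => by
    refine ((((hf t ht).fun_mul (hf₂ t ht)).const_mul (1 / 6)).fun_sub
      (((hf₁ t ht).fun_pow 2).const_mul (1 / 9))).congr_deriv ?_
    norm_num
  intro m hm
  rw [Wu, hF.pd_of_q_eq_zero hf (v := ey) rfl m hm, hF.dtot hK hk m hm, hF.pd_eq' hf m hm,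
    hK m hm]
  dsimp only
  ring

theorem cartanG (hF : FactorsThroughQ F f) (hf : ∀ t, 0 < t → HasDerivAt f (f₁ t) t)
    (hf₁ : ∀ t, 0 < t → HasDerivAt f₁ (f₂ t) t) (hf₂ : ∀ t, 0 < t → HasDerivAt f₂ (f₃ t) t)
    (hf₃ : ∀ t, 0 < t → HasDerivAt f₃ (f₄ t) t) :
    FactorsThroughQ (CartanG F) fun t => f t * f₁ t * f₃ t + f t ^ 2 * f₄ t := by
  have hFq := hF.pd_eq' hf
  have hDFqq := hF.dtot (hFq.pd_eq' hf₁) hf₂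
  have hff₃ : ∀ t, 0 < t → HasDerivAt (fun t => f t * f₃ t) (f₁ t * f₃ t + f t * f₄ t) t :=
    fun t ht => (hf t ht).fun_mul (hf₃ t ht)
  intro m hm
  rw [CartanG, hF.dtot hDFqq hff₃ m hm,
    hF.dtot (hFq.pd_of_q_eq_zero hf₁ (v := ep) rfl) (fun t _ => hasDerivAt_const t 0) m hm,
    hFq.pd_of_q_eq_zero hf₁ (v := ey) rfl m hm]
  ring

end FactorsThroughQ

-- Writing the derivatives of `t ^ r` as `c * t ^ r / t ^ k` makes every identity below a
-- rational-function identity in the atoms `t ^ r` and `t`.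
theorem hasDerivAt_mul_rpow_div_pow (c r : ℝ) (k : ℕ) {t : ℝ} (ht : 0 < t) :
    HasDerivAt (fun t => c * t ^ r / t ^ k) (c * (r - k) * t ^ r / t ^ (k + 1)) t := by
  refine (((Real.hasDerivAt_rpow_const (p := r) (Or.inl ht.ne')).const_mul c).div
    (hasDerivAt_pow k t) (pow_ne_zero k ht.ne')).congr_deriv ?_
  rw [Real.rpow_sub_one ht.ne']
  rcases k with _ | k
  · simp
    ring
  · field_simp
    push_cast
    ring

theorem factorsThroughQ_rpow (r : ℝ) :
    FactorsThroughQ (fun m : V4 => m.2.2.2 ^ r) fun t => 1 * t ^ r / t ^ 0 :=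
  fun m _ => by simp

theorem wu_rpow (r : ℝ) :
    FactorsThroughQ (Wu fun m : V4 => m.2.2.2 ^ r) fun t =>
      r * (2 * r - 3) * (r - 3) / 27 * (t ^ r) ^ 3 / t ^ 3 := by
  have hpow c k := fun t (ht : 0 < t) => hasDerivAt_mul_rpow_div_pow c r k ht
  intro m hm
  rw [(factorsThroughQ_rpow r).wu (hpow _ _) (hpow _ _) (hpow _ _) m hm]
  field_simp
  push_cast
  ring

theorem cartanG_rpow (r : ℝ) :
    FactorsThroughQ (CartanG fun m : V4 => m.2.2.2 ^ r) fun t =>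
      r * (r - 1) * (r - 2) * (2 * r - 3) * (t ^ r) ^ 3 / t ^ 4 := by
  have hpow c k := fun t (ht : 0 < t) => hasDerivAt_mul_rpow_div_pow c r k ht
  intro m hm
  rw [(factorsThroughQ_rpow r).cartanG (hpow _ _) (hpow _ _) (hpow _ _) (hpow _ _) m hm]
  field_simp
  push_cast
  ring

/-- The function `F = q^{3/2}` satisfies both the Wuenschmann condition `A ≡ 0` and the
Cartan condition `G ≡ 0` on `U = {q > 0}`. -/
theorem q_three_halves_einstein_weyl :
    ∀ m ∈ {m : V4 | m.2.2.2 > 0},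
      Wu (fun m : V4 => m.2.2.2 ^ ((3:ℝ)/2)) m = 0 ∧
      CartanG (fun m : V4 => m.2.2.2 ^ ((3:ℝ)/2)) m = 0 := by
  intro m hm
  rw [wu_rpow _ m hm, cartanG_rpow _ m hm]
  norm_num
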